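/- For each n, consider a vertex i in a graph on N_n vertices with degree d_n observed under the noisy network model with error rates α_n, β_n ∈ [0,1] and i.i.d. Bernoulli(p_n) treatment, with p_n → 0, 0 < p_n < 1, and fixed bounded potential outcomes y(c_{11}), y(c_{10}), y(c_{01}), y(c_{00}). Then the per-vertex Aronow–Samii estimators in the noisy network satisfy: (i) if d_n p_n → ∞ and liminf β_n > 0 then E[ỹ_{A&S,i}(c_{10})] → y(c_{11}) and E[ỹ_{A&S,i}(c_{00})] → y(c_{01}); (ii) if d_n p_n → 0 then E[ỹ_{A&S,i}(c_{10})] → y(c_{10}) and E[ỹ_{A&S,i}(c_{00})] → y(c_{00}). In particular, the exact identities E[ỹ_{A&S,i}(c_{10})] = y(c_{10}) + (1 − (1−β_n p_n)^{d_n})(y(c_{11}) − y(c_{10})) and E[ỹ_{A&S,i}(c_{00})] = y(c_{00}) + (1 − (1−β_n p_n)^{d_n})(y(c_{01}) − y(c_{00})) hold for every n. -/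

import Mathlib

/-!
Fix `n` and the vertex `v`. Both estimators vanish unless no observed neighbour of `v` is
treated, and on that event the weight `(1 - p)^{-d̃_v}` splits over the vertices `j`. Writing the
true exposure as `y(c₁₁) + (y(c₁₀) - y(c₁₁)) · [no true neighbour of v is treated]`, each
estimator becomes a weight in `Z_v` times a combination of products over `j` of functions of the
pairs `(Z_j, Ã_vj)`. These pairs are independent across `j`, so the expectation is a product of
two-point computations: every factor has mean one, except that a true neighbour contributes
`1 - βp`, since it must be untreated and is then either missing from the observed graph
(probability `β`) or reweighted by `(1 - p)⁻¹`. Hence the mean is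
`y(c₁₁) + (y(c₁₀) - y(c₁₁))(1 - βp)^d` (and likewise at `c₀₀`), and the limits follow from
`1 - dq ≤ (1 - q)^d ≤ exp(-dq)`.
-/

open MeasureTheory ProbabilityTheory Filter

theorem ProbabilityTheory.iIndepFun.integral_prod_restrict_eq_prod_integral
    {Ω ι κ : Type*} [MeasurableSpace Ω] {μ : Measure Ω}
    {β : ι → Type*} [∀ i, MeasurableSpace (β i)] {X : ∀ i, Ω → β i}
    (hX : iIndepFun X μ) (hXm : ∀ i, Measurable (X i))
    {S : κ → Finset ι} {F : ∀ k, (∀ i : S k, β i) → ℝ} (hF : ∀ k, Measurable (F k))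
    {J : Finset κ} (hJ : (J : Set κ).PairwiseDisjoint S) :
    ∫ ω, ∏ k ∈ J, F k (fun i => X i ω) ∂μ = ∏ k ∈ J, ∫ ω, F k (fun i => X i ω) ∂μ := by
  classical
  induction J using Finset.induction_on with
  | empty => simp [hX.isProbabilityMeasure]
  | insert a s ha ih =>
    have hdisj : Disjoint (S a) (s.biUnion S) := (Finset.disjoint_biUnion_right _ _ _).2
      fun k hk => hJ (by simp) (by simp [hk]) fun h => ha (h ▸ hk)
    let ψ : (∀ i : s.biUnion S, β i) → ℝ := fun y =>
      ∏ k : s, F k (fun i => y ⟨i, Finset.mem_biUnion.2 ⟨k, k.2, i.2⟩⟩)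
    have hψ : Measurable ψ := Finset.measurable_prod _ fun k _ => (hF k).comp (by fun_prop)
    have hind := (hX.indepFun_finset (S a) _ hdisj hXm).comp (hF a) hψ
    rw [Finset.prod_insert ha, ← ih (hJ.subset (by simp))]
    simp_rw [Finset.prod_insert ha, ← Finset.prod_attach s (fun k => F k (fun i => X i _))]
    exact hind.integral_fun_mul_eq_mul_integral
      ((hF a).comp (by fun_prop)).aestronglyMeasurable
      (hψ.comp (by fun_prop)).aestronglyMeasurable

section FiniteRange

variable {Ω α α' : Type*} [MeasurableSpace Ω] {μ : Measure Ω}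
  [MeasurableSpace α] [MeasurableSingletonClass α]
  [MeasurableSpace α'] [MeasurableSingletonClass α']

theorem integral_comp_eq_sum_of_forall_mem [IsFiniteMeasure μ] {U : Ω → α} (hU : Measurable U)
    {s : Finset α} (hs : ∀ ω, U ω ∈ s) (g : α → ℝ) :
    ∫ ω, g (U ω) ∂μ = ∑ z ∈ s, g z * μ.real {ω | U ω = z} := by
  have hsum : ∀ ω, g (U ω) = ∑ z ∈ s, {ω | U ω = z}.indicator (fun _ => g z) ω := fun ω => by
    rw [Finset.sum_eq_single_of_mem (U ω) (hs ω) fun z _ hz => by simp [Ne.symm hz]]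
    simp
  simp_rw [hsum]
  rw [integral_finsetSum _ fun z _ => (integrable_const _).indicator (hU (.singleton z))]
  refine Finset.sum_congr rfl fun z _ => ?_
  rw [integral_indicator_const (s := {ω | U ω = z}) _ (hU (.singleton z)), smul_eq_mul, mul_comm]

lemma integral_ite_inv_eq_one [DecidableEq α] {U : Ω → α} (hU : Measurable U) {z : α} {p : ℝ}
    (hp : μ.real {ω | U ω = z} = p) (hp0 : p ≠ 0) :
    ∫ ω, (if U ω = z then p⁻¹ else 0) ∂μ = 1 := by
  have hind : ∀ ω, (if U ω = z then p⁻¹ else 0) = {ω | U ω = z}.indicator (fun _ => p⁻¹) ω :=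
    fun ω => by simp [Set.indicator_apply]
  simp_rw [hind]
  rw [integral_indicator_const (s := {ω | U ω = z}) _ (hU (.singleton z)), smul_eq_mul, hp,
    mul_inv_cancel₀ hp0]

theorem ProbabilityTheory.IndepFun.integral_comp_eq_sum_sum [IsFiniteMeasure μ]
    {U : Ω → α} {V : Ω → α'} (hUV : IndepFun U V μ) (hU : Measurable U) (hV : Measurable V)
    {s : Finset α} {t : Finset α'} (hs : ∀ ω, U ω ∈ s) (ht : ∀ ω, V ω ∈ t) (f : α → α' → ℝ) :
    ∫ ω, f (U ω) (V ω) ∂μ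
      = ∑ z ∈ s, ∑ a ∈ t, f z a * (μ.real {ω | U ω = z} * μ.real {ω | V ω = a}) := by
  rw [integral_comp_eq_sum_of_forall_mem (g := fun w : α × α' => f w.1 w.2) (hU.prodMk hV)
    (s := s ×ˢ t) (fun ω => Finset.mem_product.2 ⟨hs ω, ht ω⟩), Finset.sum_product]
  refine Finset.sum_congr rfl fun z _ => Finset.sum_congr rfl fun a _ => ?_
  have hinter : {ω | (U ω, V ω) = (z, a)} = U ⁻¹' {z} ∩ V ⁻¹' {a} := by
    ext ω; simp
  rw [hinter, measureReal_def, hUV.measure_inter_preimage_eq_mul _ _ (.singleton z) (.singleton a),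
    ENNReal.toReal_mul]
  rfl

end FiniteRange

noncomputable def neighborWeight (p : ℝ) (t z a : ℕ) : ℝ :=
  if z * a = 0 ∧ z * t = 0 then ((1 - p) ^ a)⁻¹ else 0

lemma prod_neighborWeight {ι : Type*} [Fintype ι] (p : ℝ) (t z a : ι → ℕ) :
    ∏ j, neighborWeight p (t j) (z j) (a j)
      = if ∑ j, z j * a j = 0 ∧ ∑ j, z j * t j = 0 then ((1 - p) ^ ∑ j, a j)⁻¹ else 0 := by
  simp only [neighborWeight, Finset.prod_ite_zero, Finset.prod_inv_distrib,
    Finset.prod_pow_eq_pow_sum, Finset.sum_eq_zero_iff, Finset.mem_univ, true_implies,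
    forall_and]

lemma ite_mul_inv_pow_mul_ite_eq_add_prod {ι : Type*} [Fintype ι] (p ya yb : ℝ) (t z a : ι → ℕ) :
    (if ∑ j, z j * a j = 0 then (1 : ℝ) else 0) * ((1 - p) ^ ∑ j, a j)⁻¹
        * (if 0 < ∑ j, z j * t j then ya else yb)
      = ya * ∏ j, neighborWeight p 0 (z j) (a j)
        + (yb - ya) * ∏ j, neighborWeight p (t j) (z j) (a j) := by
  rw [prod_neighborWeight, prod_neighborWeight]
  simp only [mul_zero, Finset.sum_const_zero, and_true, pos_iff_ne_zero]
  by_cases ha : ∑ j, z j * a j = 0 <;> by_cases ht : ∑ j, z j * t j = 0 <;> simp [ha, ht] <;> ring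

section Bernoulli

variable {Ω : Type*} [MeasurableSpace Ω] {μ : Measure Ω} [IsProbabilityMeasure μ]

lemma measureReal_eq_zero_add_measureReal_eq_one {U : Ω → ℕ} (hU : Measurable U)
    (hU01 : ∀ ω, U ω = 0 ∨ U ω = 1) :
    μ.real {ω | U ω = 0} + μ.real {ω | U ω = 1} = 1 := by
  have h := integral_comp_eq_sum_of_forall_mem (μ := μ) hU (s := {0, 1})
    (by simpa using hU01) (fun _ => (1 : ℝ))
  simpa [Finset.sum_pair] using h.symm

lemma integral_neighborWeight {U V : Ω → ℕ} (hUV : IndepFun U V μ)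
    (hU : Measurable U) (hV : Measurable V)
    (hU01 : ∀ ω, U ω = 0 ∨ U ω = 1) (hV01 : ∀ ω, V ω = 0 ∨ V ω = 1)
    {p : ℝ} (hp : μ.real {ω | U ω = 1} = p) (hp1 : p ≠ 1) {t : ℕ} (ht : t ≤ 1) :
    ∫ ω, neighborWeight p t (U ω) (V ω) ∂μ = (1 - p * μ.real {ω | V ω = 0}) ^ t := by
  have hU0 : μ.real {ω | U ω = 0} = 1 - p := by
    linarith [measureReal_eq_zero_add_measureReal_eq_one hU hU01 (μ := μ)]
  have hV1 : μ.real {ω | V ω = 1} = 1 - μ.real {ω | V ω = 0} := by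
    linarith [measureReal_eq_zero_add_measureReal_eq_one hV hV01 (μ := μ)]
  have h1p : 1 - p ≠ 0 := sub_ne_zero.2 (Ne.symm hp1)
  rw [hUV.integral_comp_eq_sum_sum hU hV (s := {0, 1}) (t := {0, 1}) (by simpa using hU01)
    (by simpa using hV01)]
  interval_cases t <;> simp [neighborWeight, hU0, hp, hV1] <;> field_simp <;> ring

end Bernoulli

lemma c10_integrand_eq {p : ℝ} (hp : 0 < p) (hp1 : p < 1) (z S T R : ℕ) (y : Fin 4 → ℝ) :
    (if 0 < p * (1 - p) ^ S then (1 : ℝ) else 0) * (if z = 1 ∧ T = 0 then (1 : ℝ) else 0)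
        * (p * (1 - p) ^ S)⁻¹
        * (if z = 1 then (if 0 < R then y 0 else y 1) else (if 0 < R then y 2 else y 3))
      = (if z = 1 then p⁻¹ else 0)
        * ((if T = 0 then (1 : ℝ) else 0) * ((1 - p) ^ S)⁻¹ * (if 0 < R then y 0 else y 1)) := by
  have : 0 < 1 - p := sub_pos.2 hp1
  rw [if_pos (by positivity)]
  by_cases hz : z = 1
  · simp only [hz, true_and, if_true, mul_inv]
    ring
  · simp [hz]

lemma c00_integrand_eq {p : ℝ} (hp1 : p < 1) (z S T R : ℕ) (y : Fin 4 → ℝ) :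
    (if 0 < (1 - p) ^ (S + 1) then (1 : ℝ) else 0) * (if z = 0 ∧ T = 0 then (1 : ℝ) else 0)
        * ((1 - p) ^ (S + 1))⁻¹
        * (if z = 1 then (if 0 < R then y 0 else y 1) else (if 0 < R then y 2 else y 3))
      = (if z = 0 then (1 - p)⁻¹ else 0)
        * ((if T = 0 then (1 : ℝ) else 0) * ((1 - p) ^ S)⁻¹ * (if 0 < R then y 2 else y 3)) := by
  have : 0 < 1 - p := sub_pos.2 hp1
  rw [if_pos (by positivity)]
  by_cases hz : z = 0
  · simp only [hz, true_and, if_true, zero_ne_one, if_false, pow_succ, mul_inv]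
    ring
  · simp [hz]

section NoisyNetwork

def edgeIndex {N : ℕ} (v j : Fin N) : Fin N ⊕ {e : Fin N × Fin N // e.1 < e.2} :=
  if h : v < j then .inr ⟨(v, j), h⟩ else if h' : j < v then .inr ⟨(j, v), h'⟩ else .inl j

-- Assigns every coordinate of the independent family to a vertex, so that the block of `j`
-- contains both `Z j` and the edge `{v, j}`.
def edgeOwner {N : ℕ} (v : Fin N) : Fin N ⊕ {e : Fin N × Fin N // e.1 < e.2} → Fin N
  | .inl j => j
  | .inr e => if e.1.1 = v then e.1.2 else e.1.1

lemma edgeOwner_edgeIndex {N : ℕ} (v j : Fin N) : edgeOwner v (edgeIndex v j) = j := by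
  unfold edgeIndex
  split_ifs with h h'
  · simp [edgeOwner]
  · simp [edgeOwner, h'.ne]
  · rfl

lemma inl_ne_edgeIndex {N : ℕ} {v j : Fin N} (hj : j ≠ v) : .inl j ≠ edgeIndex v j := by
  unfold edgeIndex
  split_ifs with h h'
  · simp
  · simp
  · exact absurd (le_antisymm (not_lt.1 h) (not_lt.1 h')) hj

variable {Ω : Type*} {N : ℕ} {Z : Fin N → Ω → ℕ} {Atil : Fin N → Fin N → Ω → ℕ}

lemma sumElim_edgeIndex (hsymm : ∀ i j ω, Atil i j ω = Atil j i ω) {v j : Fin N} (hj : j ≠ v)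
    (ω : Ω) :
    Sum.elim Z (fun e : {e : Fin N × Fin N // e.1 < e.2} => Atil e.1.1 e.1.2) (edgeIndex v j) ω
      = Atil v j ω := by
  unfold edgeIndex
  split_ifs with h h'
  · rfl
  · exact hsymm j v ω
  · exact absurd (le_antisymm (not_lt.1 h) (not_lt.1 h')) hj

variable [MeasurableSpace Ω] {μ : Measure Ω}

lemma indepFun_row (hsymm : ∀ i j ω, Atil i j ω = Atil j i ω)
    (hindep : iIndepFun
      (Sum.elim Z (fun e : {e : Fin N × Fin N // e.1 < e.2} => Atil e.1.1 e.1.2)) μ)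
    {v j : Fin N} (hj : j ≠ v) :
    IndepFun (Z j) (Atil v j) μ := by
  have h := hindep.indepFun (inl_ne_edgeIndex hj)
  rwa [funext (sumElim_edgeIndex hsymm hj)] at h

theorem integral_prod_row_eq_prod_integral
    (hZm : ∀ i, Measurable (Z i)) (hAm : ∀ i j, Measurable (Atil i j))
    (hsymm : ∀ i j ω, Atil i j ω = Atil j i ω) (hdiag : ∀ i ω, Atil i i ω = 0)
    (hindep : iIndepFun
      (Sum.elim Z (fun e : {e : Fin N × Fin N // e.1 < e.2} => Atil e.1.1 e.1.2)) μ)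
    (v : Fin N) (f : Fin N → ℕ → ℕ → ℝ) :
    ∫ ω, ∏ j, f j (Z j ω) (Atil v j ω) ∂μ = ∏ j, ∫ ω, f j (Z j ω) (Atil v j ω) ∂μ := by
  classical
  set X := Sum.elim Z (fun e : {e : Fin N × Fin N // e.1 < e.2} => Atil e.1.1 e.1.2)
  have hXm : ∀ i, Measurable (X i) := by rintro (i | e) <;> simp [X, hZm, hAm]
  let S : Fin N → Finset (Fin N ⊕ {e : Fin N × Fin N // e.1 < e.2}) := fun j =>
    Finset.univ.filter (edgeOwner v · = j)
  have hS : ((Finset.univ : Finset (Fin N)) : Set (Fin N)).PairwiseDisjoint S :=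
    fun j _ k _ hjk => Finset.disjoint_filter.2 fun _ _ hj hk => hjk (hj.symm.trans hk)
  let F : ∀ j, (S j → ℕ) → ℝ := fun j y =>
    f j (y ⟨.inl j, Finset.mem_filter.2 ⟨Finset.mem_univ _, rfl⟩⟩)
      (if j = v then 0
        else y ⟨edgeIndex v j, Finset.mem_filter.2 ⟨Finset.mem_univ _, edgeOwner_edgeIndex v j⟩⟩)
  have hF : ∀ j ω, F j (fun i => X i ω) = f j (Z j ω) (Atil v j ω) := by
    intro j ω
    by_cases hj : j = v
    · subst hj; simp [F, X, hdiag]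
    · simp [F, hj, sumElim_edgeIndex hsymm hj, X]
  have := hindep.integral_prod_restrict_eq_prod_integral hXm
    (F := F) (fun j => measurable_of_countable _) (J := Finset.univ) hS
  simpa only [hF] using this

lemma measureReal_row_eq_zero [IsProbabilityMeasure μ] (hAm : ∀ i j, Measurable (Atil i j))
    (h01 : ∀ i j ω, Atil i j ω = 0 ∨ Atil i j ω = 1) (hsymm : ∀ i j ω, Atil i j ω = Atil j i ω)
    {A : Fin N → Fin N → ℕ} (hAsymm : ∀ i j, A i j = A j i) {β : ℝ} (hβ1 : β ≤ 1)
    (htrue : ∀ i j : Fin N, i < j → A i j = 1 →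
      μ {ω | Atil i j ω = 1} = ENNReal.ofReal (1 - β))
    {v j : Fin N} (hj : j ≠ v) (hA : A v j = 1) :
    μ.real {ω | Atil v j ω = 0} = β := by
  have h1 : μ.real {ω | Atil v j ω = 1} = 1 - β := by
    rcases hj.lt_or_gt with h | h
    · have hset : {ω | Atil v j ω = 1} = {ω | Atil j v ω = 1} := by simp_rw [hsymm v j]
      rw [measureReal_def, hset, htrue j v h ((hAsymm j v).trans hA),
        ENNReal.toReal_ofReal (by linarith)]
    · rw [measureReal_def, htrue v j h hA, ENNReal.toReal_ofReal (by linarith)]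
  linarith [measureReal_eq_zero_add_measureReal_eq_one (hAm v j) (h01 v j) (μ := μ)]

theorem integral_mul_prod_neighborWeight [IsProbabilityMeasure μ]
    (hZm : ∀ i, Measurable (Z i)) (hZ01 : ∀ i ω, Z i ω = 0 ∨ Z i ω = 1)
    (hAm : ∀ i j, Measurable (Atil i j)) (h01 : ∀ i j ω, Atil i j ω = 0 ∨ Atil i j ω = 1)
    (hsymm : ∀ i j ω, Atil i j ω = Atil j i ω) (hdiag : ∀ i ω, Atil i i ω = 0)
    (hindep : iIndepFun
      (Sum.elim Z (fun e : {e : Fin N × Fin N // e.1 < e.2} => Atil e.1.1 e.1.2)) μ)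
    {p : ℝ} (hp : ∀ j, μ.real {ω | Z j ω = 1} = p) (hp1 : p ≠ 1)
    {v : Fin N} {φ : ℕ → ℝ} (hφ : ∫ ω, φ (Z v ω) ∂μ = 1)
    {t : Fin N → ℕ} (htv : t v = 0) (ht1 : ∀ j, t j ≤ 1)
    {β : ℝ} (hβ : ∀ j, j ≠ v → t j = 1 → μ.real {ω | Atil v j ω = 0} = β) :
    ∫ ω, φ (Z v ω) * ∏ j, neighborWeight p (t j) (Z j ω) (Atil v j ω) ∂μ
      = (1 - β * p) ^ ∑ j, t j := by
  classical
  have hsplit : ∀ ω, φ (Z v ω) * ∏ j, neighborWeight p (t j) (Z j ω) (Atil v j ω)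
      = ∏ j, (if j = v then φ (Z j ω) else 1) * neighborWeight p (t j) (Z j ω) (Atil v j ω) := by
    intro ω
    rw [Finset.prod_mul_distrib, Finset.prod_ite_eq' Finset.univ v]
    simp
  simp_rw [hsplit]
  rw [integral_prod_row_eq_prod_integral hZm hAm hsymm hdiag hindep v
    (fun j z a => (if j = v then φ z else 1) * neighborWeight p (t j) z a),
    ← Finset.prod_pow_eq_pow_sum]
  refine Finset.prod_congr rfl fun j _ => ?_
  by_cases hj : j = v
  · subst hj
    simp [htv, hdiag, neighborWeight, hφ]
  · simp only [hj, if_false, one_mul]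
    rw [integral_neighborWeight (indepFun_row hsymm hindep hj) (hZm j) (hAm v j) (hZ01 j)
      (h01 v j) (hp j) hp1 (ht1 j)]
    rcases Nat.le_one_iff_eq_zero_or_eq_one.1 (ht1 j) with h | h
    · simp [h]
    · rw [h, hβ j hj h, mul_comm]

theorem integral_estimator_row [IsProbabilityMeasure μ]
    (hZm : ∀ i, Measurable (Z i)) (hZ01 : ∀ i ω, Z i ω = 0 ∨ Z i ω = 1)
    (hAm : ∀ i j, Measurable (Atil i j)) (h01 : ∀ i j ω, Atil i j ω = 0 ∨ Atil i j ω = 1)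
    (hsymm : ∀ i j ω, Atil i j ω = Atil j i ω) (hdiag : ∀ i ω, Atil i i ω = 0)
    (hindep : iIndepFun
      (Sum.elim Z (fun e : {e : Fin N × Fin N // e.1 < e.2} => Atil e.1.1 e.1.2)) μ)
    {p : ℝ} (hp : ∀ j, μ.real {ω | Z j ω = 1} = p) (hp1 : p < 1)
    {A : Fin N → Fin N → ℕ} (hAsymm : ∀ i j, A i j = A j i) (hAdiag : ∀ i, A i i = 0)
    (hA01 : ∀ i j, A i j = 0 ∨ A i j = 1) {β : ℝ} (hβ1 : β ≤ 1)
    (htrue : ∀ i j : Fin N, i < j → A i j = 1 →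
      μ {ω | Atil i j ω = 1} = ENNReal.ofReal (1 - β))
    {v : Fin N} {φ : ℕ → ℝ} (hφ : ∫ ω, φ (Z v ω) ∂μ = 1) (ya yb : ℝ) :
    ∫ ω, φ (Z v ω) * ((if ∑ j, Z j ω * Atil v j ω = 0 then (1 : ℝ) else 0)
        * ((1 - p) ^ ∑ j, Atil v j ω)⁻¹ * (if 0 < ∑ j, Z j ω * A v j then ya else yb)) ∂μ
      = ya + (yb - ya) * (1 - β * p) ^ ∑ j, A v j := by
  have hp0 : 0 ≤ p := hp v ▸ measureReal_nonneg
  have hq : (1 - β * p) ^ ∑ j, A v j ≠ 0 := pow_ne_zero _ (by nlinarith)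
  have h0 := integral_mul_prod_neighborWeight hZm hZ01 hAm h01 hsymm hdiag hindep hp hp1.ne hφ
    (t := fun _ => 0) rfl (fun _ => zero_le_one) (β := β) fun _ _ h => absurd h zero_ne_one
  have hA := integral_mul_prod_neighborWeight hZm hZ01 hAm h01 hsymm hdiag hindep hp hp1.ne hφ
    (hAdiag v) (fun j => (hA01 v j).elim (·.le.trans zero_le_one) (·.le))
    fun j hj hA => measureReal_row_eq_zero hAm h01 hsymm hAsymm hβ1 htrue hj hA
  simp only [Finset.sum_const_zero, pow_zero] at h0
  simp_rw [ite_mul_inv_pow_mul_ite_eq_add_prod p ya yb (A v), mul_add, mul_left_comm (φ _)]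
  rw [integral_add ((Integrable.of_integral_ne_zero (by rw [h0]; exact one_ne_zero)).const_mul _)
      ((Integrable.of_integral_ne_zero (by rw [hA]; exact hq)).const_mul _),
    integral_const_mul, integral_const_mul, h0, hA, mul_one]

end NoisyNetwork

section Limits

lemma tendsto_one_sub_pow_of_tendsto_mul_nhds_zero {q : ℕ → ℝ} {d : ℕ → ℕ}
    (hq0 : ∀ n, 0 ≤ q n) (hq1 : ∀ n, q n ≤ 1)
    (hdq : Tendsto (fun n => (d n : ℝ) * q n) atTop (nhds 0)) :
    Tendsto (fun n => (1 - q n) ^ d n) atTop (nhds 1) := by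
  have hlower : ∀ n, 1 - (d n : ℝ) * q n ≤ (1 - q n) ^ d n := fun n => by
    simpa [sub_eq_add_neg, mul_neg] using one_add_mul_le_pow (a := -q n) (by linarith [hq1 n]) (d n)
  have hupper : ∀ n, (1 - q n) ^ d n ≤ 1 := fun n =>
    pow_le_one₀ (by linarith [hq1 n]) (by linarith [hq0 n])
  exact tendsto_of_tendsto_of_tendsto_of_le_of_le (by simpa using hdq.const_sub 1)
    tendsto_const_nhds hlower hupper

lemma tendsto_one_sub_pow_of_tendsto_mul_atTop {q : ℕ → ℝ} {d : ℕ → ℕ} (hq1 : ∀ n, q n ≤ 1)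
    (hdq : Tendsto (fun n => (d n : ℝ) * q n) atTop atTop) :
    Tendsto (fun n => (1 - q n) ^ d n) atTop (nhds 0) := by
  have hupper : ∀ n, (1 - q n) ^ d n ≤ Real.exp (-((d n : ℝ) * q n)) := fun n => by
    rw [neg_mul_eq_mul_neg, Real.exp_nat_mul]
    exact pow_le_pow_left₀ (by linarith [hq1 n]) (by linarith [Real.add_one_le_exp (-q n)]) _
  exact tendsto_of_tendsto_of_tendsto_of_le_of_le tendsto_const_nhds
    (Real.tendsto_exp_neg_atTop_nhds_zero.comp hdq)
    (fun n => pow_nonneg (by linarith [hq1 n]) _) hupper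

lemma tendsto_mul_atTop_of_liminf_pos {x b : ℕ → ℝ} (hb0 : ∀ n, 0 ≤ b n)
    (hb : 0 < liminf b atTop) (hx : Tendsto x atTop atTop) :
    Tendsto (fun n => x n * b n) atTop atTop := by
  have hhalf : ∀ᶠ n in atTop, liminf b atTop / 2 < b n :=
    eventually_lt_of_lt_liminf (by linarith) (isBoundedUnder_of ⟨0, hb0⟩)
  refine tendsto_atTop_mono' atTop ?_ (hx.atTop_mul_const (half_pos hb))
  filter_upwards [hhalf, hx.eventually_ge_atTop 0] with n hn hxn
  exact mul_le_mul_of_nonneg_left hn.le hxn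

lemma tendsto_one_sub_mul_pow_nhds_zero {β p : ℕ → ℝ} {d : ℕ → ℕ}
    (hβ : ∀ n, 0 ≤ β n ∧ β n ≤ 1) (hp0 : ∀ n, 0 ≤ p n) (hp1 : ∀ n, p n ≤ 1)
    (hdp : Tendsto (fun n => (d n : ℝ) * p n) atTop atTop) (hliminf : 0 < liminf β atTop) :
    Tendsto (fun n => (1 - β n * p n) ^ d n) atTop (nhds 0) := by
  refine tendsto_one_sub_pow_of_tendsto_mul_atTop
    (fun n => mul_le_one₀ (hβ n).2 (hp0 n) (hp1 n)) ?_
  exact (tendsto_mul_atTop_of_liminf_pos (fun n => (hβ n).1) hliminf hdp).congr fun n => by ring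

lemma tendsto_one_sub_mul_pow_nhds_one {β p : ℕ → ℝ} {d : ℕ → ℕ}
    (hβ : ∀ n, 0 ≤ β n ∧ β n ≤ 1) (hp0 : ∀ n, 0 ≤ p n) (hp1 : ∀ n, p n ≤ 1)
    (hdp : Tendsto (fun n => (d n : ℝ) * p n) atTop (nhds 0)) :
    Tendsto (fun n => (1 - β n * p n) ^ d n) atTop (nhds 1) := by
  have hq0 : ∀ n, 0 ≤ β n * p n := fun n => mul_nonneg (hβ n).1 (hp0 n)
  refine tendsto_one_sub_pow_of_tendsto_mul_nhds_zero hq0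
    (fun n => mul_le_one₀ (hβ n).2 (hp0 n) (hp1 n)) ?_
  exact squeeze_zero (fun n => mul_nonneg (Nat.cast_nonneg _) (hq0 n))
    (fun n => mul_le_mul_of_nonneg_left (mul_le_of_le_one_left (hp0 n) (hβ n).2)
      (Nat.cast_nonneg _)) hdp

end Limits

-- Outcomes are indexed by 0 ↦ c₁₁, 1 ↦ c₁₀, 2 ↦ c₀₁, 3 ↦ c₀₀.
theorem aronow_samii_pervertex_c10_c00_general
    (Ω : ℕ → Type) [∀ n, MeasurableSpace (Ω n)]
    (μ : ∀ n, Measure (Ω n)) [∀ n, IsProbabilityMeasure (μ n)]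
    (N : ℕ → ℕ)
    (A : ∀ n, Fin (N n) → Fin (N n) → ℕ)
    (hAsymm : ∀ n i j, A n i j = A n j i)
    (hAdiag : ∀ n i, A n i i = 0)
    (hA01 : ∀ n i j, A n i j = 0 ∨ A n i j = 1)
    (β p : ℕ → ℝ)
    (hβ01 : ∀ n, 0 ≤ β n ∧ β n ≤ 1)
    (hp01 : ∀ n, 0 < p n ∧ p n < 1)
    (Z : ∀ n, Fin (N n) → Ω n → ℕ)
    (hZmeas : ∀ n i, Measurable (Z n i))
    (hZ01 : ∀ n i ω, Z n i ω = 0 ∨ Z n i ω = 1)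
    (hZp : ∀ n i, μ n {ω | Z n i ω = 1} = ENNReal.ofReal (p n))
    (Atil : ∀ n, Fin (N n) → Fin (N n) → Ω n → ℕ)
    (hmeas : ∀ n i j, Measurable (Atil n i j))
    (hsymm : ∀ n i j ω, Atil n i j ω = Atil n j i ω)
    (hdiag : ∀ n i ω, Atil n i i ω = 0)
    (h01 : ∀ n i j ω, Atil n i j ω = 0 ∨ Atil n i j ω = 1)
    (htrue : ∀ n, ∀ i j : Fin (N n), i < j → A n i j = 1 →
      μ n {ω | Atil n i j ω = 1} = ENNReal.ofReal (1 - β n))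
    (hindep : ∀ n, iIndepFun
      (Sum.elim (Z n)
        (fun e : {e : Fin (N n) × Fin (N n) // e.1 < e.2} => Atil n e.1.1 e.1.2)) (μ n))
    -- the distinguished vertex and its degree
    (v : ∀ n, Fin (N n)) (d : ℕ → ℕ) (hd : ∀ n, d n = ∑ j, A n (v n) j)
    -- fixed bounded potential outcomes
    (y : Fin 4 → ℝ)
    -- per-vertex Aronow–Samii estimators at levels c_10 and c_00
    (E10 E00 : ℕ → ℝ)
    (hE10 : ∀ n, E10 n = ∫ ω,
      ((if 0 < p n * (1 - p n) ^ (∑ j, Atil n (v n) j ω) then (1:ℝ) else 0)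
        * (if Z n (v n) ω = 1 ∧ (∑ j, Z n j ω * Atil n (v n) j ω) = 0 then (1:ℝ) else 0)
        * (p n * (1 - p n) ^ (∑ j, Atil n (v n) j ω))⁻¹
        * (if Z n (v n) ω = 1 then
            (if 0 < ∑ j, Z n j ω * A n (v n) j then y 0 else y 1)
           else
            (if 0 < ∑ j, Z n j ω * A n (v n) j then y 2 else y 3))) ∂μ n)
    (hE00 : ∀ n, E00 n = ∫ ω,
      ((if 0 < (1 - p n) ^ ((∑ j, Atil n (v n) j ω) + 1) then (1:ℝ) else 0)
        * (if Z n (v n) ω = 0 ∧ (∑ j, Z n j ω * Atil n (v n) j ω) = 0 then (1:ℝ) else 0)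
        * ((1 - p n) ^ ((∑ j, Atil n (v n) j ω) + 1))⁻¹
        * (if Z n (v n) ω = 1 then
            (if 0 < ∑ j, Z n j ω * A n (v n) j then y 0 else y 1)
           else
            (if 0 < ∑ j, Z n j ω * A n (v n) j then y 2 else y 3))) ∂μ n) :
    -- (i) if d_n p_n → ∞ and liminf β_n > 0
    (Tendsto (fun n => (d n : ℝ) * p n) atTop atTop →
      0 < Filter.liminf β atTop →
      Tendsto E10 atTop (nhds (y 0)) ∧ Tendsto E00 atTop (nhds (y 2))) ∧
    -- (ii) if d_n p_n → 0
    (Tendsto (fun n => (d n : ℝ) * p n) atTop (nhds 0) →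
      Tendsto E10 atTop (nhds (y 1)) ∧ Tendsto E00 atTop (nhds (y 3))) ∧
    -- exact identities
    (∀ n, E10 n = y 1 + (1 - (1 - β n * p n) ^ (d n)) * (y 0 - y 1)) ∧
    (∀ n, E00 n = y 3 + (1 - (1 - β n * p n) ^ (d n)) * (y 2 - y 3)) := by
  have hZ1 : ∀ n j, (μ n).real {ω | Z n j ω = 1} = p n := fun n j => by
    rw [measureReal_def, hZp, ENNReal.toReal_ofReal (hp01 n).1.le]
  have hZ0 : ∀ n j, (μ n).real {ω | Z n j ω = 0} = 1 - p n := fun n j => by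
    linarith [measureReal_eq_zero_add_measureReal_eq_one (hZmeas n j) (hZ01 n j) (μ := μ n),
      hZ1 n j]
  have hrow := fun n (φ : ℕ → ℝ) => integral_estimator_row (hZmeas n) (hZ01 n) (hmeas n) (h01 n)
    (hsymm n) (hdiag n) (hindep n) (hZ1 n) (hp01 n).2 (hAsymm n) (hAdiag n) (hA01 n) (hβ01 n).2
    (htrue n) (v := v n) (φ := φ)
  have h10 : ∀ n, E10 n = y 1 + (1 - (1 - β n * p n) ^ d n) * (y 0 - y 1) := fun n => by
    simp_rw [hE10, c10_integrand_eq (hp01 n).1 (hp01 n).2,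
      hrow n (fun z => if z = 1 then (p n)⁻¹ else 0)
        (integral_ite_inv_eq_one (hZmeas n (v n)) (hZ1 n (v n)) (hp01 n).1.ne'), hd]
    ring
  have h00 : ∀ n, E00 n = y 3 + (1 - (1 - β n * p n) ^ d n) * (y 2 - y 3) := fun n => by
    simp_rw [hE00, c00_integrand_eq (hp01 n).2,
      hrow n (fun z => if z = 0 then (1 - p n)⁻¹ else 0)
        (integral_ite_inv_eq_one (hZmeas n (v n)) (hZ0 n (v n)) (sub_pos.2 (hp01 n).2).ne'), hd]
    ring
  have hlim : ∀ c, Tendsto (fun n => (1 - β n * p n) ^ d n) atTop (nhds c) →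
      Tendsto E10 atTop (nhds (y 1 + (1 - c) * (y 0 - y 1)))
        ∧ Tendsto E00 atTop (nhds (y 3 + (1 - c) * (y 2 - y 3))) := fun c hc => by
    rw [funext h10, funext h00]
    exact ⟨((tendsto_const_nhds.sub hc).mul_const _).const_add _,
      ((tendsto_const_nhds.sub hc).mul_const _).const_add _⟩
  have hp0 : ∀ n, 0 ≤ p n := fun n => (hp01 n).1.le
  have hp1 : ∀ n, p n ≤ 1 := fun n => (hp01 n).2.le
  refine ⟨fun hdp hβ => ?_, fun hdp => ?_, h10, h00⟩
  · simpa using hlim 0 (tendsto_one_sub_mul_pow_nhds_zero hβ01 hp0 hp1 hdp hβ)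
  · simpa using hlim 1 (tendsto_one_sub_mul_pow_nhds_one hβ01 hp0 hp1 hdp)

/-- Per-vertex limits of the Aronow–Samii estimators at levels c_10 and
c_00 in noisy networks, together with the exact identities
`E[ỹ_{A&S,i}(c_10)] = y(c_10) + (1−(1−β_n p_n)^{d_n})(y(c_11)−y(c_10))` and
`E[ỹ_{A&S,i}(c_00)] = y(c_00) + (1−(1−β_n p_n)^{d_n})(y(c_01)−y(c_00))`.
Outcomes are indexed by 0 ↦ c_11, 1 ↦ c_10, 2 ↦ c_01, 3 ↦ c_00. -/
theorem aronow_samii_pervertex_c10_c00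
    (Ω : ℕ → Type) [∀ n, MeasurableSpace (Ω n)]
    (μ : ∀ n, Measure (Ω n)) [∀ n, IsProbabilityMeasure (μ n)]
    (N : ℕ → ℕ)
    (A : ∀ n, Fin (N n) → Fin (N n) → ℕ)
    (hAsymm : ∀ n i j, A n i j = A n j i)
    (hAdiag : ∀ n i, A n i i = 0)
    (hA01 : ∀ n i j, A n i j = 0 ∨ A n i j = 1)
    (α β p : ℕ → ℝ)
    (hα01 : ∀ n, 0 ≤ α n ∧ α n ≤ 1) (hβ01 : ∀ n, 0 ≤ β n ∧ β n ≤ 1)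
    (hp01 : ∀ n, 0 < p n ∧ p n < 1) (hp0 : Tendsto p atTop (nhds 0))
    (Z : ∀ n, Fin (N n) → Ω n → ℕ)
    (hZmeas : ∀ n i, Measurable (Z n i))
    (hZ01 : ∀ n i ω, Z n i ω = 0 ∨ Z n i ω = 1)
    (hZp : ∀ n i, μ n {ω | Z n i ω = 1} = ENNReal.ofReal (p n))
    (Atil : ∀ n, Fin (N n) → Fin (N n) → Ω n → ℕ)
    (hmeas : ∀ n i j, Measurable (Atil n i j))
    (hsymm : ∀ n i j ω, Atil n i j ω = Atil n j i ω)
    (hdiag : ∀ n i ω, Atil n i i ω = 0)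
    (h01 : ∀ n i j ω, Atil n i j ω = 0 ∨ Atil n i j ω = 1)
    (hfalse : ∀ n, ∀ i j : Fin (N n), i < j → A n i j = 0 →
      μ n {ω | Atil n i j ω = 1} = ENNReal.ofReal (α n))
    (htrue : ∀ n, ∀ i j : Fin (N n), i < j → A n i j = 1 →
      μ n {ω | Atil n i j ω = 1} = ENNReal.ofReal (1 - β n))
    (hindep : ∀ n, iIndepFun
      (Sum.elim (Z n)
        (fun e : {e : Fin (N n) × Fin (N n) // e.1 < e.2} => Atil n e.1.1 e.1.2)) (μ n))
    -- the distinguished vertex and its degree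
    (v : ∀ n, Fin (N n)) (d : ℕ → ℕ) (hd : ∀ n, d n = ∑ j, A n (v n) j)
    -- fixed bounded potential outcomes
    (y : Fin 4 → ℝ) (c : ℝ) (hy : ∀ k, |y k| ≤ c)
    -- per-vertex Aronow–Samii estimators at levels c_10 and c_00
    (E10 E00 : ℕ → ℝ)
    (hE10 : ∀ n, E10 n = ∫ ω,
      ((if 0 < p n * (1 - p n) ^ (∑ j, Atil n (v n) j ω) then (1:ℝ) else 0)
        * (if Z n (v n) ω = 1 ∧ (∑ j, Z n j ω * Atil n (v n) j ω) = 0 then (1:ℝ) else 0)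
        * (p n * (1 - p n) ^ (∑ j, Atil n (v n) j ω))⁻¹
        * (if Z n (v n) ω = 1 then
            (if 0 < ∑ j, Z n j ω * A n (v n) j then y 0 else y 1)
           else
            (if 0 < ∑ j, Z n j ω * A n (v n) j then y 2 else y 3))) ∂μ n)
    (hE00 : ∀ n, E00 n = ∫ ω,
      ((if 0 < (1 - p n) ^ ((∑ j, Atil n (v n) j ω) + 1) then (1:ℝ) else 0)
        * (if Z n (v n) ω = 0 ∧ (∑ j, Z n j ω * Atil n (v n) j ω) = 0 then (1:ℝ) else 0)
        * ((1 - p n) ^ ((∑ j, Atil n (v n) j ω) + 1))⁻¹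
        * (if Z n (v n) ω = 1 then
            (if 0 < ∑ j, Z n j ω * A n (v n) j then y 0 else y 1)
           else
            (if 0 < ∑ j, Z n j ω * A n (v n) j then y 2 else y 3))) ∂μ n) :
    -- (i) if d_n p_n → ∞ and liminf β_n > 0
    (Tendsto (fun n => (d n : ℝ) * p n) atTop atTop →
      0 < Filter.liminf β atTop →
      Tendsto E10 atTop (nhds (y 0)) ∧ Tendsto E00 atTop (nhds (y 2))) ∧
    -- (ii) if d_n p_n → 0
    (Tendsto (fun n => (d n : ℝ) * p n) atTop (nhds 0) →
      Tendsto E10 atTop (nhds (y 1)) ∧ Tendsto E00 atTop (nhds (y 3))) ∧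
    -- exact identities
    (∀ n, E10 n = y 1 + (1 - (1 - β n * p n) ^ (d n)) * (y 0 - y 1)) ∧
    (∀ n, E00 n = y 3 + (1 - (1 - β n * p n) ^ (d n)) * (y 2 - y 3)) :=
  aronow_samii_pervertex_c10_c00_general Ω μ N A hAsymm hAdiag hA01 β p hβ01 hp01 Z hZmeas hZ01 hZp
    Atil hmeas hsymm hdiag h01 htrue hindep v d hd y E10 E00 hE10 hE00
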